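/- Let A be an n×n nonnegative matrix with all entries at most 1, and let B be the Boolean matrix defined by B_{ij} = 1 if A_{ij} = 1 and B_{ij} = 0 if A_{ij} < 1. Then, for an integer q ≥ 1, the following are equivalent: (a) q is the period of B, i.e., q is the least positive integer such that there exists t_0 with B^{⊗(t+q)} = B^{⊗t} for all t ≥ t_0; (b) q is the asymptotic period of the sequence (A^{⊗k})_{k∈ℕ}, i.e., q is the least positive integer such that for each j = 1, …, q the entrywise limit lim_{k→∞} A^{⊗(j+kq)} exists. -/

import Mathlib

/-!
Let `c < 1` bound the entries of `A` that are not `1`. Every entry of `A^t` is then either `1` or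
at most `c`, and `B^t` is exactly the pattern of the `1`-entries of `A^t`. So if `A^(j + k q)`
converges, its pattern `B^(j + k q)` is eventually constant in `k`, and `B` is eventually
`q`-periodic.

Conversely, a walk with more than `w` edges of weight `< 1` weighs at most `c^w`, so `A^t` is
within `c^w` of the best weight `D_w(t)` of walks of length `t` with at most `w` such edges. Now
`D_w` is obtained from the powers of `B` by max-times convolutions, hence is eventually
`q`-periodic when `B` is; therefore every sequence `A^(j + k q)` is Cauchy.
-/

open Filter Topology

/-- Max-times product of two square nonnegative matrices. -/
noncomputable def mProd {m : Type*} [Fintype m] (A B : Matrix m m NNReal) : Matrix m m NNReal :=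
  fun i j => Finset.univ.sup fun k => A i k * B k j

/-- Max-times powers: `mPow A 0 = I`, `mPow A (k+1) = A ⊗ mPow A k`. -/
noncomputable def mPow {m : Type*} [Fintype m] [DecidableEq m] (A : Matrix m m NNReal) :
    ℕ → Matrix m m NNReal
  | 0 => 1
  | k + 1 => mProd A (mPow A k)

/-- Max-times action of a matrix on a nonnegative vector. -/
noncomputable def mVec {m : Type*} [Fintype m] (A : Matrix m m NNReal) (x : m → NNReal) :
    m → NNReal :=
  fun i => Finset.univ.sup fun k => A i k * x k

/-- Maximum circuit geometric mean of a nonnegative matrix. -/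
noncomputable def mu {m : Type*} [Fintype m] [DecidableEq m] (A : Matrix m m NNReal) : NNReal :=
  (Finset.Icc 1 (Fintype.card m)).sup fun ℓ =>
    Finset.univ.sup fun i => (mPow A ℓ i i) ^ ((ℓ : ℝ)⁻¹)

open Finset.HasAntidiagonal
open scoped NNReal

lemma cauchySeq_of_forall_eventually_dist_le {X : Type*} [PseudoMetricSpace X] {x : ℕ → X}
    (h : ∀ ε > 0, ∃ p, ∀ᶠ k in atTop, dist (x k) p ≤ ε) : CauchySeq x := by
  refine Metric.cauchySeq_iff.2 fun ε hε => ?_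
  obtain ⟨p, hp⟩ := h (ε / 3) (by positivity)
  obtain ⟨N, hN⟩ := eventually_atTop.1 hp
  refine ⟨N, fun k hk l hl => (dist_triangle_right _ _ p).trans_lt ?_⟩
  linarith [hN k hk, hN l hl]

lemma NNReal.dist_le_of_le_of_le_max {x p δ : ℝ≥0} (hp : p ≤ x) (hx : x ≤ max p δ) :
    dist x p ≤ δ := by
  have hx' : (x : ℝ) ≤ p + δ := by exact_mod_cast hx.trans (max_le le_self_add le_add_self)
  rw [NNReal.dist_eq, abs_of_nonneg (sub_nonneg.2 (by exact_mod_cast hp))]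
  linarith

lemma eventually_iff_of_tendsto_of_eq_one_or_le {α : Type*} {l : Filter α} {x : α → ℝ≥0}
    {c a : ℝ≥0} (hc : c < 1) (hx : ∀ k, x k = 1 ∨ x k ≤ c) (h : Tendsto x l (𝓝 a)) :
    ∀ᶠ k in l, (x k = 1 ↔ c < a) := by
  by_cases ha : c < a
  · exact (h.eventually (eventually_gt_nhds ha)).mono fun k hk =>
      iff_of_true ((hx k).resolve_right hk.not_ge) ha
  · exact (h.eventually (eventually_lt_nhds ((not_lt.1 ha).trans_lt hc))).mono fun k hk =>
      iff_of_false hk.ne ha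

lemma sup_antidiagonal_eventually_periodic {α : Type*} [SemilatticeSup α] [OrderBot α]
    {F : ℕ → ℕ → α} {q : ℕ} (h₁ : ∀ᶠ s in atTop, ∀ r, F (s + q) r = F s r)
    (h₂ : ∀ᶠ r in atTop, ∀ s, F s (r + q) = F s r) :
    ∀ᶠ t in atTop, (antidiagonal (t + q)).sup (fun p => F p.1 p.2) =
      (antidiagonal t).sup (fun p => F p.1 p.2) := by
  obtain ⟨S, hS⟩ := eventually_atTop.1 h₁
  obtain ⟨R, hR⟩ := eventually_atTop.1 h₂
  have hle {a b n : ℕ} (h : a + b = n) : F a b ≤ (antidiagonal n).sup (fun p => F p.1 p.2) :=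
    Finset.le_sup (f := fun p : ℕ × ℕ => F p.1 p.2) (b := (a, b)) (mem_antidiagonal.2 h)
  refine eventually_atTop.2 ⟨S + R + q, fun t ht => le_antisymm ?_ ?_⟩ <;>
    refine Finset.sup_le fun p hp => ?_ <;> rw [mem_antidiagonal] at hp
  · by_cases hs : S + q ≤ p.1
    · rw [← Nat.sub_add_cancel (le_of_add_le_right hs), hS _ (by omega)]
      exact hle (by omega)
    · rw [← Nat.sub_add_cancel (show q ≤ p.2 by omega), hR _ (by omega)]
      exact hle (by omega)
  · by_cases hs : S ≤ p.1
    · rw [← hS _ hs]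
      exact hle (by omega)
    · rw [← hR _ (by omega)]
      exact hle (by omega)

section Periodic

variable {α : Type*} {f : ℕ → α} {q : ℕ}

lemma eventuallyConst_add_mul_of_eventually_periodic (h : ∀ᶠ t in atTop, f (t + q) = f t)
    (j : ℕ) : EventuallyConst (fun k => f (j + k * q)) atTop := by
  rcases q.eq_zero_or_pos with rfl | hq
  · simp
  obtain ⟨T, hT⟩ := eventually_atTop.1 h
  refine eventuallyConst_atTop_nat.2 ⟨T, fun k hk => ?_⟩
  rw [add_one_mul, ← add_assoc]
  exact hT _ (le_add_left (hk.trans (Nat.le_mul_of_pos_right k hq)))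

lemma eventually_periodic_of_eventuallyConst (hq : 0 < q)
    (h : ∀ j ∈ Finset.Icc 1 q, EventuallyConst (fun k => f (j + k * q)) atTop) :
    ∀ᶠ t in atTop, f (t + q) = f t := by
  have hstep : ∀ᶠ k in atTop, ∀ j ∈ Finset.Icc 1 q, f (j + (k + 1) * q) = f (j + k * q) :=
    (eventually_all_finset _).2 fun j hj =>
      eventually_atTop.2 (eventuallyConst_atTop_nat.1 (h j hj))
  obtain ⟨N, hN⟩ := eventually_atTop.1 hstep
  refine eventually_atTop.2 ⟨N * q + 1, fun t ht => ?_⟩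
  have hdecomp : t = ((t - 1) % q + 1) + (t - 1) / q * q := by
    have := Nat.mod_add_div' (t - 1) q; omega
  have hk : N ≤ (t - 1) / q := (Nat.le_div_iff_mul_le hq).2 (by omega)
  have hj : (t - 1) % q + 1 ∈ Finset.Icc 1 q :=
    Finset.mem_Icc.2 ⟨by omega, by have := Nat.mod_lt (t - 1) hq; omega⟩
  rw [hdecomp, add_assoc, ← add_one_mul, hN _ hk _ hj]

end Periodic

section MaxTimes

variable {m : Type*} [Fintype m]

lemma mProd_apply (A B : Matrix m m ℝ≥0) (i j : m) :
    mProd A B i j = Finset.univ.sup fun k => A i k * B k j := rfl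

lemma le_mProd_apply (A B : Matrix m m ℝ≥0) (i k j : m) : A i k * B k j ≤ mProd A B i j :=
  Finset.le_sup (f := fun k => A i k * B k j) (Finset.mem_univ k)

lemma mProd_apply_le_iff {A B : Matrix m m ℝ≥0} {i j : m} {x : ℝ≥0} :
    mProd A B i j ≤ x ↔ ∀ k, A i k * B k j ≤ x := by
  simp [mProd_apply]

lemma mProd_mono {A A' B B' : Matrix m m ℝ≥0} (hA : ∀ i j, A i j ≤ A' i j)
    (hB : ∀ i j, B i j ≤ B' i j) (i j : m) : mProd A B i j ≤ mProd A' B' i j :=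
  mProd_apply_le_iff.2 fun k => (mul_le_mul' (hA i k) (hB k j)).trans (le_mProd_apply _ _ _ _ _)

lemma mProd_assoc (A B C : Matrix m m ℝ≥0) : mProd (mProd A B) C = mProd A (mProd B C) := by
  funext i j
  simp only [mProd_apply, NNReal.finset_sup_mul, NNReal.mul_finset_sup, mul_assoc]
  exact Finset.sup_comm _ _ fun k l => A i l * (B l k * C k j)

variable [DecidableEq m]

lemma one_mProd (A : Matrix m m ℝ≥0) : mProd 1 A = A := by
  funext i j
  refine le_antisymm (mProd_apply_le_iff.2 fun k => ?_) ?_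
  · rcases eq_or_ne i k with rfl | h <;> simp [*]
  · simpa using le_mProd_apply 1 A i i j

lemma mPow_zero (A : Matrix m m ℝ≥0) : mPow A 0 = 1 := rfl

lemma mPow_succ (A : Matrix m m ℝ≥0) (t : ℕ) : mPow A (t + 1) = mProd A (mPow A t) := rfl

lemma mPow_add (A : Matrix m m ℝ≥0) (s t : ℕ) :
    mPow A (s + t) = mProd (mPow A s) (mPow A t) := by
  induction s with
  | zero => rw [zero_add, mPow_zero, one_mProd]
  | succ s ih => rw [add_right_comm, mPow_succ, ih, mPow_succ, mProd_assoc]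

lemma mPow_le_one {A : Matrix m m ℝ≥0} (hA : ∀ i j, A i j ≤ 1) (t : ℕ) (i j : m) :
    mPow A t i j ≤ 1 := by
  induction t generalizing i j with
  | zero => rcases eq_or_ne i j with rfl | h <;> simp [mPow_zero, *]
  | succ t ih => exact mProd_apply_le_iff.2 fun k => mul_le_one' (hA i k) (ih k j)

lemma mPow_mono {A B : Matrix m m ℝ≥0} (h : ∀ i j, A i j ≤ B i j) (t : ℕ) (i j : m) :
    mPow A t i j ≤ mPow B t i j := by
  induction t generalizing i j with
  | zero => exact le_rfl
  | succ t ih => exact mProd_mono h ih i j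

end MaxTimes

section Critical

variable {m : Type*} [Fintype m] {A B : Matrix m m ℝ≥0}

lemma exists_lt_one_forall_ne_one_le (hA : ∀ i j, A i j ≤ 1) :
    ∃ c < 1, ∀ i j, A i j ≠ 1 → A i j ≤ c := by
  let g : m × m → ℝ≥0 := fun p => if A p.1 p.2 = 1 then 0 else A p.1 p.2
  refine ⟨Finset.univ.sup g, (Finset.sup_lt_iff zero_lt_one).2 fun p _ => ?_, fun i j h => ?_⟩
  · by_cases h : A p.1 p.2 = 1
    · simp [g, h]
    · simpa [g, h] using (hA p.1 p.2).lt_of_ne h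
  · simpa [g, h] using Finset.le_sup (f := g) (Finset.mem_univ (i, j))

variable [DecidableEq m]

lemma mPow_eq_one_or_le (hA : ∀ i j, A i j ≤ 1) {c : ℝ≥0}
    (hc : ∀ i j, A i j ≠ 1 → A i j ≤ c) (t : ℕ) (i j : m) :
    mPow A t i j = 1 ∨ mPow A t i j ≤ c := by
  induction t generalizing i j with
  | zero => rcases eq_or_ne i j with rfl | h <;> simp [mPow_zero, *]
  | succ t ih =>
    refine Finset.sup_mem {x | x = 1 ∨ x ≤ c} (Or.inr bot_le) (fun x hx y hy => ?_) _ _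
      fun u _ => ?_
    · rcases max_choice x y with h | h <;> rw [h] <;> assumption
    · rcases ih u j with h | h
      · rw [h, mul_one]
        exact (eq_or_ne (A i u) 1).imp id (hc i u)
      · exact Or.inr ((mul_le_mul' (hA i u) h).trans_eq (one_mul c))

lemma mPow_apply_eq_ite (hA : ∀ i j, A i j ≤ 1)
    (hB : ∀ i j, B i j = if A i j = 1 then 1 else 0) (t : ℕ) (i j : m) :
    mPow B t i j = if mPow A t i j = 1 then 1 else 0 := by
  -- on `[0, 1]`, `x ↦ if 1 ≤ x then 1 else 0` is a monotone homomorphism of `(max, *)`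
  let π : ℝ≥0 → ℝ≥0 := fun x => if 1 ≤ x then 1 else 0
  have hπ {x : ℝ≥0} (hx : x ≤ 1) : π x = if x = 1 then 1 else 0 := by
    simp only [π, hx.ge_iff_eq]
  have hπ_mul {x y : ℝ≥0} (hx : x ≤ 1) (hy : y ≤ 1) : π (x * y) = π x * π y := by
    rw [hπ hx, hπ hy, hπ (mul_le_one' hx hy)]
    rcases hx.eq_or_lt with rfl | hx
    · simp
    rcases hy.eq_or_lt with rfl | hy
    · simp
    simp [hx.ne, hy.ne, (mul_lt_one_of_nonneg_of_lt_one_left bot_le hx hy.le).ne]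
  have hπ_mono : Monotone π := fun x y hxy => by
    by_cases hx : 1 ≤ x
    · simp [π, hx, hx.trans hxy]
    · simp [π, hx]
  suffices h : ∀ t i j, mPow B t i j = π (mPow A t i j) by
    rw [h, hπ (mPow_le_one hA t i j)]
  intro t
  induction t with
  | zero => intro i j; rcases eq_or_ne i j with rfl | h <;> simp [π, mPow_zero, *]
  | succ t ih =>
    intro i j
    rw [mPow_succ, mPow_succ, mProd_apply, mProd_apply,
      Finset.apply_sup_eq_sup_comp_of_linearOrder π hπ_mono (by simp [π])]
    refine Finset.sup_congr rfl fun u _ => ?_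
    rw [Function.comp_apply, hπ_mul (hA i u) (mPow_le_one hA t u j), ih, hB, hπ (hA i u)]

end Critical

section Defect

variable {m : Type*} [Fintype m] [DecidableEq m] {A B : Matrix m m ℝ≥0}

/-- The largest weight of a walk of length `t` from `i` to `j` whose edges are weighted by `B`,
except for at most `w` of them, which are weighted by `A`. -/
noncomputable def defectPow (A B : Matrix m m ℝ≥0) : ℕ → ℕ → Matrix m m ℝ≥0
  | 0, t => mPow B t
  | w + 1, 0 => defectPow A B w 0
  | w + 1, t + 1 => fun i j => max (defectPow A B w (t + 1) i j)
      ((antidiagonal t).sup fun p => mProd (mPow B p.1) (mProd A (defectPow A B w p.2)) i j)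

lemma defectPow_succ_succ_apply (w t : ℕ) (i j : m) :
    defectPow A B (w + 1) (t + 1) i j = max (defectPow A B w (t + 1) i j)
      ((antidiagonal t).sup fun p => mProd (mPow B p.1) (mProd A (defectPow A B w p.2)) i j) :=
  rfl

lemma defectPow_zero_right (w : ℕ) : defectPow A B w 0 = 1 := by
  induction w with
  | zero => rfl
  | succ w ih => exact ih

lemma mProd_le_defectPow_succ_succ (w t : ℕ) (i j : m) :
    mProd A (defectPow A B w t) i j ≤ defectPow A B (w + 1) (t + 1) i j := by
  rw [defectPow_succ_succ_apply, ← one_mProd (mProd A _), ← mPow_zero B]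
  exact le_max_of_le_right
    (Finset.le_sup
      (f := fun p : ℕ × ℕ => mProd (mPow B p.1) (mProd A (defectPow A B w p.2)) i j)
      (b := (0, t)) (mem_antidiagonal.2 (zero_add t)))

lemma defectPow_le_mPow (hBA : ∀ i j, B i j ≤ A i j) (w t : ℕ) (i j : m) :
    defectPow A B w t i j ≤ mPow A t i j := by
  induction w generalizing t i j with
  | zero => exact mPow_mono hBA t i j
  | succ w ih =>
    cases t with
    | zero => exact ih 0 i j
    | succ t =>
      refine max_le (ih _ i j) (Finset.sup_le fun p hp => ?_)
      calc mProd (mPow B p.1) (mProd A (defectPow A B w p.2)) i j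
          ≤ mProd (mPow A p.1) (mProd A (mPow A p.2)) i j :=
            mProd_mono (mPow_mono hBA p.1) (mProd_mono (fun _ _ => le_rfl) (ih p.2)) i j
        _ = mPow A (t + 1) i j := by
            rw [← mPow_succ, ← mPow_add, ← add_assoc, mem_antidiagonal.1 hp]

lemma mProd_defectPow_le (w t : ℕ) (i j : m) :
    mProd B (defectPow A B w t) i j ≤ defectPow A B w (t + 1) i j := by
  induction w generalizing t i j with
  | zero => exact le_rfl
  | succ w ih =>
    cases t with
    | zero => exact (ih 0 i j).trans (le_max_left _ _)
    | succ t =>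
      refine mProd_apply_le_iff.2 fun u => ?_
      rw [defectPow_succ_succ_apply, mul_max, NNReal.mul_finset_sup]
      refine max_le_max ((le_mProd_apply _ _ _ _ _).trans (ih _ i j))
        (Finset.sup_le fun p hp => ?_)
      calc B i u * mProd (mPow B p.1) (mProd A (defectPow A B w p.2)) u j
          ≤ mProd B (mProd (mPow B p.1) (mProd A (defectPow A B w p.2))) i j :=
            le_mProd_apply _ _ _ _ _
        _ = mProd (mPow B (p.1 + 1)) (mProd A (defectPow A B w p.2)) i j := by
            rw [mPow_succ, mProd_assoc]
        _ ≤ _ := Finset.le_sup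
              (f := fun p : ℕ × ℕ => mProd (mPow B p.1) (mProd A (defectPow A B w p.2)) i j)
              (b := (p.1 + 1, p.2))
              (mem_antidiagonal.2 (by rw [← mem_antidiagonal.1 hp]; ring))

lemma mPow_le_max_defectPow (hA : ∀ i j, A i j ≤ 1) (hcrit : ∀ i j, A i j = 1 → B i j = 1)
    {c : ℝ≥0} (hc : ∀ i j, A i j ≠ 1 → A i j ≤ c) (w t : ℕ) (i j : m) :
    mPow A t i j ≤ max (defectPow A B w t i j) (c ^ w) := by
  induction t generalizing w i j with
  | zero => rw [defectPow_zero_right]; exact le_max_left _ _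
  | succ t ih =>
    refine mProd_apply_le_iff.2 fun u => ?_
    by_cases hu : A i u = 1
    · rw [hu, one_mul]
      refine (ih w u j).trans (max_le_max ?_ le_rfl)
      calc defectPow A B w t u j = B i u * defectPow A B w t u j := by
            rw [hcrit i u hu, one_mul]
        _ ≤ mProd B (defectPow A B w t) i j := le_mProd_apply _ _ _ _ _
        _ ≤ _ := mProd_defectPow_le w t i j
    · cases w with
      | zero =>
        exact le_max_of_le_right (by simpa using mul_le_one' (hA i u) (mPow_le_one hA t u j))
      | succ w =>
        calc A i u * mPow A t u j ≤ A i u * max (defectPow A B w t u j) (c ^ w) := by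
              gcongr; exact ih w u j
          _ = max (A i u * defectPow A B w t u j) (A i u * c ^ w) := mul_max _ _ _
          _ ≤ max (defectPow A B (w + 1) (t + 1) i j) (c ^ (w + 1)) := by
              refine max_le_max ((le_mProd_apply _ _ _ _ _).trans
                (mProd_le_defectPow_succ_succ w t i j)) ?_
              rw [pow_succ']
              gcongr
              exact hc i u hu

lemma defectPow_eventually_periodic {q : ℕ} (hper : ∀ᶠ t in atTop, mPow B (t + q) = mPow B t)
    (w : ℕ) : ∀ᶠ t in atTop, defectPow A B w (t + q) = defectPow A B w t := by
  induction w with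
  | zero => exact hper
  | succ w ih =>
    set F : m → m → ℕ → ℕ → ℝ≥0 := fun i j s r =>
      mProd (mPow B s) (mProd A (defectPow A B w r)) i j
    have hsup : ∀ᶠ t in atTop, ∀ i j,
        (antidiagonal (t + q)).sup (fun p => F i j p.1 p.2) =
          (antidiagonal t).sup (fun p => F i j p.1 p.2) :=
      eventually_all.2 fun i => eventually_all.2 fun j =>
        sup_antidiagonal_eventually_periodic (hper.mono fun s hs r => by simp only [F, hs])
          (ih.mono fun r hr s => by simp only [F, hr])
    obtain ⟨T, hT⟩ := eventually_atTop.1 (ih.and hsup)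
    refine eventually_atTop.2 ⟨T + 1, fun t ht => ?_⟩
    obtain ⟨t, rfl⟩ : ∃ s, t = s + 1 := ⟨t - 1, by omega⟩
    funext i j
    have hshift : defectPow A B w (t + q + 1) = defectPow A B w (t + 1) := by
      rw [add_right_comm]; exact (hT (t + 1) (by omega)).1
    rw [add_right_comm, defectPow_succ_succ_apply, defectPow_succ_succ_apply, hshift,
      (hT t (by omega)).2 i j]

end Defect

section Period

variable {m : Type*} [Fintype m] [DecidableEq m] {A B : Matrix m m ℝ≥0}

theorem tendsto_mPow_of_eventually_periodic (hA : ∀ i j, A i j ≤ 1)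
    (hB : ∀ i j, B i j = if A i j = 1 then 1 else 0) {q : ℕ}
    (hper : ∀ᶠ t in atTop, mPow B (t + q) = mPow B t) (j : ℕ) :
    ∃ L : Matrix m m ℝ≥0, Tendsto (fun k => mPow A (j + k * q)) atTop (𝓝 L) := by
  obtain ⟨c, hc1, hc⟩ := exists_lt_one_forall_ne_one_le hA
  have hBA : ∀ i j, B i j ≤ A i j := fun i j => by
    rw [hB]; split_ifs with h
    exacts [h.ge, bot_le]
  have hcrit : ∀ i j, A i j = 1 → B i j = 1 := fun i j h => by rw [hB, if_pos h]
  suffices h : ∀ i i', CauchySeq fun k => mPow A (j + k * q) i i' by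
    choose L hL using fun i i' => cauchySeq_tendsto_of_complete (h i i')
    exact ⟨L, tendsto_pi_nhds.2 fun i => tendsto_pi_nhds.2 (hL i)⟩
  intro i i'
  refine cauchySeq_of_forall_eventually_dist_le fun ε hε => ?_
  obtain ⟨w, hw⟩ := exists_pow_lt_of_lt_one hε (show (c : ℝ) < 1 by exact_mod_cast hc1)
  have hconst := eventuallyConst_add_mul_of_eventually_periodic
    (defectPow_eventually_periodic (A := A) hper w) j
  obtain ⟨P, hP⟩ := hconst.eventuallyEq_const
  refine ⟨P i i', hP.mono fun k hk => ?_⟩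
  have hlower := defectPow_le_mPow hBA w (j + k * q) i i'
  have hupper := mPow_le_max_defectPow hA hcrit hc w (j + k * q) i i'
  simp only [hk] at hlower hupper
  exact (NNReal.dist_le_of_le_of_le_max hlower hupper).trans (by exact_mod_cast hw.le)

theorem eventually_periodic_of_tendsto (hA : ∀ i j, A i j ≤ 1)
    (hB : ∀ i j, B i j = if A i j = 1 then 1 else 0) {q : ℕ} (hq : 0 < q)
    (h : ∀ j, 1 ≤ j → j ≤ q → ∃ L : Matrix m m ℝ≥0,
      Tendsto (fun k => mPow A (j + k * q)) atTop (𝓝 L)) :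
    ∀ᶠ t in atTop, mPow B (t + q) = mPow B t := by
  obtain ⟨c, hc1, hc⟩ := exists_lt_one_forall_ne_one_le hA
  refine eventually_periodic_of_eventuallyConst hq fun j hj => ?_
  obtain ⟨L, hL⟩ := h j (Finset.mem_Icc.1 hj).1 (Finset.mem_Icc.1 hj).2
  have hone : ∀ᶠ k in atTop, ∀ i i', (mPow A (j + k * q) i i' = 1 ↔ c < L i i') :=
    eventually_all.2 fun i => eventually_all.2 fun i' =>
      eventually_iff_of_tendsto_of_eq_one_or_le hc1 (fun k => mPow_eq_one_or_le hA hc _ i i')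
        (tendsto_pi_nhds.1 (tendsto_pi_nhds.1 hL i) i')
  refine eventuallyConst_iff_exists_eventuallyEq.2
    ⟨fun i i' => if c < L i i' then 1 else 0, hone.mono fun k hk => ?_⟩
  funext i i'
  simp only [mPow_apply_eq_ite hA hB, hk]

theorem eventually_periodic_iff_tendsto (hA : ∀ i j, A i j ≤ 1)
    (hB : ∀ i j, B i j = if A i j = 1 then 1 else 0) {q : ℕ} (hq : 0 < q) :
    (∃ t₀ : ℕ, ∀ t : ℕ, t₀ ≤ t → mPow B (t + q) = mPow B t) ↔
      ∀ j : ℕ, 1 ≤ j → j ≤ q → ∃ L : Matrix m m ℝ≥0,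
        Tendsto (fun k => mPow A (j + k * q)) atTop (𝓝 L) := by
  rw [← eventually_atTop]
  exact ⟨fun hper j _ _ => tendsto_mPow_of_eventually_periodic hA hB hper j,
    eventually_periodic_of_tendsto hA hB hq⟩

end Period

theorem stmt_15_general (n : ℕ) (A B : Matrix (Fin n) (Fin n) NNReal)
    (hA : ∀ i j, A i j ≤ 1)
    (hB : ∀ i j, B i j = if A i j = 1 then 1 else 0)
    (q : ℕ) :
    IsLeast {q' : ℕ | 1 ≤ q' ∧ ∃ t₀ : ℕ, ∀ t : ℕ, t₀ ≤ t → mPow B (t + q') = mPow B t} q ↔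
      IsLeast {q' : ℕ | 1 ≤ q' ∧ ∀ j : ℕ, 1 ≤ j → j ≤ q' →
        ∃ L : Matrix (Fin n) (Fin n) NNReal,
          Tendsto (fun k => mPow A (j + k * q')) atTop (nhds L)} q :=
  iff_of_eq (congrArg (IsLeast · q) (Set.ext fun _ =>
    and_congr_right fun hq => eventually_periodic_iff_tendsto hA hB hq))

theorem stmt_15 (n : ℕ) (A B : Matrix (Fin n) (Fin n) NNReal)
    (hA : ∀ i j, A i j ≤ 1)
    (hB : ∀ i j, B i j = if A i j = 1 then 1 else 0)
    (q : ℕ) (hq : 1 ≤ q) :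
    IsLeast {q' : ℕ | 1 ≤ q' ∧ ∃ t₀ : ℕ, ∀ t : ℕ, t₀ ≤ t → mPow B (t + q') = mPow B t} q ↔
      IsLeast {q' : ℕ | 1 ≤ q' ∧ ∀ j : ℕ, 1 ≤ j → j ≤ q' →
        ∃ L : Matrix (Fin n) (Fin n) NNReal,
          Tendsto (fun k => mPow A (j + k * q')) atTop (nhds L)} q :=
  stmt_15_general n A B hA hB q
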